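/- arXiv:2108.08812 — 5 statements merged into one kernel-verified Lean document; each statement's English description precedes it below -/
import Mathlib

section
/- Fix a state s. For any parameters θ, θ' ∈ ℝ^d with ‖θ − θ'‖₂ ≤ 1/2, the soft-max policies satisfy ∑_{a ∈ 𝒜} |π_{θ'}(a|s) − π_θ(a|s)| ≤ 8‖θ − θ'‖₂. -/
open scoped BigOperators

/-- The soft-max policy with parameter `θ` induced by the feature map `φ`:
`π_θ(a|s) = exp(⟨φ(s,a), θ⟩) / ∑_{a'} exp(⟨φ(s,a'), θ⟩)`. -/
noncomputable def softmaxPolicy {S A : Type*} [Fintype A] {d : ℕ}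
    (φ : S → A → EuclideanSpace ℝ (Fin d)) (θ : EuclideanSpace ℝ (Fin d))
    (s : S) (a : A) : ℝ :=
  Real.exp (inner ℝ (φ s a) θ : ℝ) / ∑ a' : A, Real.exp (inner ℝ (φ s a') θ : ℝ)

/-!
If the logits `f` and `g` differ by at most `δ` in every coordinate, then every numerator
`exp (g a)` and the normaliser `∑ exp (g a')` are within a factor `exp δ` of those of `f`, so
`softmax g a` is within a factor `exp (2δ)` of `softmax f a`. Hence
`|softmax g a - softmax f a| ≤ (exp (2δ) - 1) softmax f a`, and summing over `a` bounds the
total variation by `exp (2δ) - 1 ≤ 4δ` for `δ ≤ 1/2`. For the soft-max policies the logits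
are `⟨φ(s,a), θ⟩`, and by Cauchy–Schwarz they move by at most `‖θ - θ'‖` since `‖φ(s,a)‖ ≤ 1`.
-/

open Real

namespace Real

section Softmax

variable {A : Type*} [Fintype A]

noncomputable def softmax (f : A → ℝ) (a : A) : ℝ :=
  exp (f a) / ∑ a', exp (f a')

lemma softmaxPolicy_eq_softmax {S : Type*} {d : ℕ} (φ : S → A → EuclideanSpace ℝ (Fin d))
    (θ : EuclideanSpace ℝ (Fin d)) (s : S) :
    softmaxPolicy φ θ s = softmax fun a => inner ℝ (φ s a) θ :=
  rfl

lemma softmax_nonneg (f : A → ℝ) (a : A) : 0 ≤ softmax f a := by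
  unfold softmax
  positivity

lemma sum_exp_pos [Nonempty A] (f : A → ℝ) : 0 < ∑ a, exp (f a) :=
  Finset.sum_pos (fun _ _ => exp_pos _) Finset.univ_nonempty

lemma sum_softmax [Nonempty A] (f : A → ℝ) : ∑ a, softmax f a = 1 := by
  unfold softmax
  rw [← Finset.sum_div, div_self (sum_exp_pos f).ne']

lemma exp_le_exp_mul_exp_of_abs_sub_le {x y δ : ℝ} (h : |x - y| ≤ δ) :
    exp x ≤ exp δ * exp y := by
  rw [← exp_add]
  exact exp_le_exp.mpr (by linarith [(abs_le.mp h).2])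

variable [Nonempty A] {f g : A → ℝ} {δ : ℝ}

lemma softmax_le_exp_mul_softmax (h : ∀ a, |g a - f a| ≤ δ) (a : A) :
    softmax g a ≤ exp (2 * δ) * softmax f a := by
  have hZ : ∑ a', exp (f a') ≤ exp δ * ∑ a', exp (g a') := by
    rw [Finset.mul_sum]
    exact Finset.sum_le_sum fun a' _ =>
      exp_le_exp_mul_exp_of_abs_sub_le (by rw [abs_sub_comm]; exact h a')
  rw [softmax, softmax, ← mul_div_assoc, div_le_div_iff₀ (sum_exp_pos g) (sum_exp_pos f)]
  calc exp (g a) * ∑ a', exp (f a')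
      ≤ (exp δ * exp (f a)) * (exp δ * ∑ a', exp (g a')) :=
        mul_le_mul (exp_le_exp_mul_exp_of_abs_sub_le (h a)) hZ
          (sum_exp_pos f).le (by positivity)
    _ = exp (2 * δ) * exp (f a) * ∑ a', exp (g a') := by
        rw [two_mul, exp_add]
        ring

lemma abs_softmax_sub_softmax_le (h : ∀ a, |g a - f a| ≤ δ) (a : A) :
    |softmax g a - softmax f a| ≤ (exp (2 * δ) - 1) * softmax f a := by
  set E := exp (2 * δ)
  have hE : 0 < E := exp_pos _
  have hup := softmax_le_exp_mul_softmax h a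
  have hlo : softmax f a ≤ E * softmax g a :=
    softmax_le_exp_mul_softmax (fun a => by rw [abs_sub_comm]; exact h a) a
  -- `E + E⁻¹ ≥ 2` turns the lower ratio bound `E⁻¹` into a deviation of at most `E - 1`.
  have hgap : 1 - E⁻¹ ≤ E - 1 := by
    have : (E - 1) ^ 2 / E = E - 1 - (1 - E⁻¹) := by field_simp
    linarith [div_nonneg (sq_nonneg (E - 1)) hE.le]
  have hlo' : E⁻¹ * softmax f a ≤ softmax g a := by
    rw [inv_mul_le_iff₀ hE]
    exact hlo
  rw [abs_le]
  constructor <;> nlinarith [softmax_nonneg f a]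

lemma sum_abs_softmax_sub_softmax_le (h : ∀ a, |g a - f a| ≤ δ) :
    ∑ a, |softmax g a - softmax f a| ≤ exp (2 * δ) - 1 :=
  calc ∑ a, |softmax g a - softmax f a|
      ≤ ∑ a, (exp (2 * δ) - 1) * softmax f a :=
        Finset.sum_le_sum fun a _ => abs_softmax_sub_softmax_le h a
    _ = exp (2 * δ) - 1 := by rw [← Finset.mul_sum, sum_softmax, mul_one]

end Softmax

end Real

/-- Nearby soft-max policies: if `‖θ − θ'‖₂ ≤ 1/2`, then
`∑_a |π_{θ'}(a|s) − π_θ(a|s)| ≤ 8‖θ − θ'‖₂`. -/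
theorem statement_0 {S A : Type*} [Fintype A] [Nonempty A] {d : ℕ}
    (φ : S → A → EuclideanSpace ℝ (Fin d))
    (hφ : ∀ s a, ‖φ s a‖ ≤ 1)
    (s : S) (θ θ' : EuclideanSpace ℝ (Fin d))
    (h : ‖θ - θ'‖ ≤ 1 / 2) :
    ∑ a : A, |softmaxPolicy φ θ' s a - softmaxPolicy φ θ s a| ≤ 8 * ‖θ - θ'‖ := by
  set δ := ‖θ - θ'‖
  have hlogits : ∀ a, |inner ℝ (φ s a) θ' - inner ℝ (φ s a) θ| ≤ δ := fun a =>
    calc |inner ℝ (φ s a) θ' - inner ℝ (φ s a) θ|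
        = |inner ℝ (φ s a) (θ' - θ)| := by rw [inner_sub_right]
      _ ≤ ‖φ s a‖ * ‖θ' - θ‖ := abs_real_inner_le_norm _ _
      _ ≤ δ := by rw [norm_sub_rev]; exact mul_le_of_le_one_left (norm_nonneg _) (hφ s a)
  have hδ : 0 ≤ δ := norm_nonneg _
  have hexp : exp (2 * δ) - 1 ≤ 2 * |2 * δ| :=
    (le_abs_self _).trans (abs_exp_sub_one_le (by rw [abs_of_nonneg (by positivity)]; linarith))
  rw [softmaxPolicy_eq_softmax, softmaxPolicy_eq_softmax]
  calc _ ≤ exp (2 * δ) - 1 := sum_abs_softmax_sub_softmax_le hlogits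
    _ ≤ 8 * δ := by rw [abs_of_nonneg (by positivity)] at hexp; linarith
end

section
/- For any parameters θ, θ' ∈ ℝ^d, any state s and any action a, the ratio of soft-max policies is bounded as π_{θ'}(a|s) ≤ e^{2‖θ − θ'‖₂} · π_θ(a|s). Consequently, if in addition ‖θ − θ'‖₂ ≤ 1/2, then π_{θ'}(a|s) − π_θ(a|s) ≤ 4 π_θ(a|s) ‖θ − θ'‖₂. -/
open scoped BigOperators

open Real

lemma exp_two_mul_le_one_add_four_mul {x : ℝ} (h0 : 0 ≤ x) (h1 : x ≤ 1 / 2) :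
    exp (2 * x) ≤ 1 + 4 * x := by
  have hconv := convexOn_exp.2 (Set.mem_univ 0) (Set.mem_univ 1)
    (show 0 ≤ 1 - 2 * x by linarith) (show 0 ≤ 2 * x by linarith) (by ring)
  simp only [smul_eq_mul, mul_zero, mul_one, zero_add, exp_zero] at hconv
  have he : exp 1 ≤ 3 := by linarith [exp_one_lt_d9]
  nlinarith

lemma abs_inner_sub_inner_le_norm_sub {E : Type*} [NormedAddCommGroup E] [InnerProductSpace ℝ E]
    {u : E} (hu : ‖u‖ ≤ 1) (t t' : E) :
    |inner ℝ u t - inner ℝ u t'| ≤ ‖t - t'‖ := by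
  rw [← inner_sub_right]
  calc |inner ℝ u (t - t')| ≤ ‖u‖ * ‖t - t'‖ := abs_real_inner_le_norm _ _
    _ ≤ ‖t - t'‖ := mul_le_of_le_one_left (norm_nonneg _) hu

lemma exp_div_sum_exp_le_exp_two_mul {A : Type*} [Fintype A] {f g : A → ℝ} {c : ℝ}
    (hfg : ∀ b, |f b - g b| ≤ c) (a : A) :
    exp (f a) / ∑ b, exp (f b) ≤ exp (2 * c) * (exp (g a) / ∑ b, exp (g b)) := by
  have hpos : ∀ h : A → ℝ, 0 < ∑ b, exp (h b) := fun h =>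
    Finset.sum_pos (fun b _ => exp_pos _) ⟨a, Finset.mem_univ a⟩
  have hnum : exp (f a) ≤ exp c * exp (g a) := by
    rw [← exp_add, exp_le_exp]
    linarith [(abs_le.1 (hfg a)).2]
  have hden : ∑ b, exp (g b) ≤ exp c * ∑ b, exp (f b) := by
    rw [Finset.mul_sum]
    refine Finset.sum_le_sum fun b _ => ?_
    rw [← exp_add, exp_le_exp]
    linarith [(abs_le.1 (hfg b)).1]
  rw [← mul_div_assoc, div_le_div_iff₀ (hpos f) (hpos g)]
  calc exp (f a) * ∑ b, exp (g b)
      ≤ (exp c * exp (g a)) * (exp c * ∑ b, exp (f b)) :=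
        mul_le_mul hnum hden (hpos g).le (by positivity)
    _ = exp (2 * c) * exp (g a) * ∑ b, exp (f b) := by
        rw [two_mul, exp_add]; ring

theorem statement_1_general {S A : Type*} [Fintype A] {d : ℕ}
    (φ : S → A → EuclideanSpace ℝ (Fin d))
    (hφ : ∀ s a, ‖φ s a‖ ≤ 1)
    (s : S) (a : A) (θ θ' : EuclideanSpace ℝ (Fin d)) :
    softmaxPolicy φ θ' s a ≤ Real.exp (2 * ‖θ - θ'‖) * softmaxPolicy φ θ s a ∧
    (‖θ - θ'‖ ≤ 1 / 2 →
      softmaxPolicy φ θ' s a - softmaxPolicy φ θ s a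
        ≤ 4 * softmaxPolicy φ θ s a * ‖θ - θ'‖) := by
  have hratio : softmaxPolicy φ θ' s a ≤ exp (2 * ‖θ - θ'‖) * softmaxPolicy φ θ s a := by
    refine exp_div_sum_exp_le_exp_two_mul (f := fun b => inner ℝ (φ s b) θ')
      (g := fun b => inner ℝ (φ s b) θ) (fun b => ?_) a
    rw [norm_sub_rev]
    exact abs_inner_sub_inner_le_norm_sub (hφ s b) θ' θ
  refine ⟨hratio, fun hsmall => ?_⟩
  have hπ : 0 ≤ softmaxPolicy φ θ s a := by unfold softmaxPolicy; positivity
  have hexp := exp_two_mul_le_one_add_four_mul (norm_nonneg (θ - θ')) hsmall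
  nlinarith

/-- The ratio of soft-max policies is bounded as
`π_{θ'}(a|s) ≤ e^{2‖θ − θ'‖} · π_θ(a|s)`; consequently if `‖θ − θ'‖ ≤ 1/2` then
`π_{θ'}(a|s) − π_θ(a|s) ≤ 4 π_θ(a|s) ‖θ − θ'‖`. -/
theorem statement_1 {S A : Type*} [Fintype A] [Nonempty A] {d : ℕ}
    (φ : S → A → EuclideanSpace ℝ (Fin d))
    (hφ : ∀ s a, ‖φ s a‖ ≤ 1)
    (s : S) (a : A) (θ θ' : EuclideanSpace ℝ (Fin d)) :
    softmaxPolicy φ θ' s a ≤ Real.exp (2 * ‖θ - θ'‖) * softmaxPolicy φ θ s a ∧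
    (‖θ - θ'‖ ≤ 1 / 2 →
      softmaxPolicy φ θ' s a - softmaxPolicy φ θ s a
        ≤ 4 * softmaxPolicy φ θ s a * ‖θ - θ'‖) :=
  statement_1_general φ hφ s a θ θ'
end

section
/- Let φ_1, …, φ_N ∈ ℝ^d, let λ > 0, and set Σ = ∑_{k=1}^N φ_k φ_kᵀ + λ·I. If Δ_1, …, Δ_N ∈ ℝ satisfy |Δ_k| ≤ ε for all k, then ‖∑_{k=1}^N φ_k Δ_k‖_{Σ^{-1}} ≤ √N · ε. -/
open Matrix

/-!
Put `w = Σ⁻¹ v` for `v = ∑ Δ_k φ_k`, so that `t = vᵀ Σ⁻¹ v = wᵀ Σ w` and `t = ∑ Δ_k (φ_k ⬝ w)`.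
Since `Σ` dominates the Gram part, `∑ (φ_k ⬝ w)² ≤ wᵀ Σ w = t`, and Cauchy–Schwarz gives
`t ≤ ‖Δ‖₂ √t`, i.e. `t ≤ ‖Δ‖₂² ≤ N ε²`.
-/

variable {n ι : Type*} [Fintype n] [Fintype ι]

theorem dotProduct_sum_vecMulVec_self_mulVec (φ : ι → n → ℝ) (x : n → ℝ) :
    x ⬝ᵥ ((∑ k, vecMulVec (φ k) (φ k)) *ᵥ x) = ∑ k, (φ k ⬝ᵥ x) ^ 2 := by
  rw [sum_mulVec, dotProduct_sum]
  refine Finset.sum_congr rfl fun k _ => ?_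
  rw [vecMulVec_mulVec, op_smul_eq_smul, dotProduct_smul, smul_eq_mul, dotProduct_comm x, sq]

theorem sum_sq_dotProduct_le_dotProduct_mulVec (φ : ι → n → ℝ) [DecidableEq n] {lam : ℝ}
    (hlam : 0 ≤ lam) (x : n → ℝ) :
    ∑ k, (φ k ⬝ᵥ x) ^ 2 ≤
      x ⬝ᵥ ((∑ k, vecMulVec (φ k) (φ k) + lam • (1 : Matrix n n ℝ)) *ᵥ x) := by
  rw [add_mulVec, dotProduct_add, dotProduct_sum_vecMulVec_self_mulVec, smul_mulVec, one_mulVec,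
    dotProduct_smul, smul_eq_mul]
  exact le_add_of_nonneg_right (mul_nonneg hlam (Finset.sum_nonneg fun i _ => mul_self_nonneg _))

theorem posDef_sum_vecMulVec_self_add_smul_one [DecidableEq n] (φ : ι → n → ℝ) {lam : ℝ}
    (hlam : 0 < lam) : (∑ k, vecMulVec (φ k) (φ k) + lam • (1 : Matrix n n ℝ)).PosDef :=
  PosDef.posSemidef_add
    (posSemidef_sum _ fun k _ => by simpa using posSemidef_vecMulVec_self_star (φ k))
    (PosDef.one.smul hlam)

theorem dotProduct_inv_mulVec_sum_smul_le_sum_sq [DecidableEq n] {A : Matrix n n ℝ}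
    (hA : IsUnit A.det) (φ : ι → n → ℝ) (hφ : ∀ x, ∑ k, (φ k ⬝ᵥ x) ^ 2 ≤ x ⬝ᵥ (A *ᵥ x))
    (Δ : ι → ℝ) :
    (∑ k, Δ k • φ k) ⬝ᵥ (A⁻¹ *ᵥ ∑ k, Δ k • φ k) ≤ ∑ k, Δ k ^ 2 := by
  set v := ∑ k, Δ k • φ k
  set w := A⁻¹ *ᵥ v
  have hAw : A *ᵥ w = v := by rw [mulVec_mulVec, mul_nonsing_inv _ hA, one_mulVec]
  have h_gram : ∑ k, (φ k ⬝ᵥ w) ^ 2 ≤ v ⬝ᵥ w := by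
    simpa only [hAw, dotProduct_comm w] using hφ w
  have h_cs : v ⬝ᵥ w ≤ √(∑ k, Δ k ^ 2) * √(v ⬝ᵥ w) :=
    calc v ⬝ᵥ w = ∑ k, Δ k * (φ k ⬝ᵥ w) := by
          simp only [v, sum_dotProduct, smul_dotProduct, smul_eq_mul]
      _ ≤ √(∑ k, Δ k ^ 2) * √(∑ k, (φ k ⬝ᵥ w) ^ 2) := Real.sum_mul_le_sqrt_mul_sqrt _ _ _
      _ ≤ √(∑ k, Δ k ^ 2) * √(v ⬝ᵥ w) := by gcongr
  have ht : 0 ≤ v ⬝ᵥ w := (Finset.sum_nonneg fun k _ => sq_nonneg _).trans h_gram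
  have hΔ : 0 ≤ ∑ k, Δ k ^ 2 := Finset.sum_nonneg fun k _ => sq_nonneg _
  nlinarith [Real.sq_sqrt ht, Real.sq_sqrt hΔ, sq_nonneg (√(∑ k, Δ k ^ 2) - √(v ⬝ᵥ w))]

theorem sqrt_sum_sq_le_sqrt_card_mul {Δ : ι → ℝ} {ε : ℝ} (hΔ : ∀ k, |Δ k| ≤ ε) :
    √(∑ k, Δ k ^ 2) ≤ √(Fintype.card ι) * ε := by
  cases isEmpty_or_nonempty ι with
  | inl _ => simp
  | inr h =>
    have hε : 0 ≤ ε := (abs_nonneg _).trans (hΔ h.some)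
    have h_sum : ∑ k, Δ k ^ 2 ≤ Fintype.card ι * ε ^ 2 := by
      simpa using Finset.sum_le_sum fun k (_ : k ∈ Finset.univ) =>
        sq_le_sq.mpr ((hΔ k).trans (le_abs_self ε))
    calc √(∑ k, Δ k ^ 2) ≤ √(Fintype.card ι * ε ^ 2) := Real.sqrt_le_sqrt h_sum
      _ = √(Fintype.card ι) * ε := by rw [Real.sqrt_mul (Nat.cast_nonneg _), Real.sqrt_sq hε]

/-- Projection bound: with `Σ = ∑_k φ_k φ_kᵀ + λI` (`λ > 0`) and `|Δ_k| ≤ ε`,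
`‖∑_k φ_k Δ_k‖_{Σ⁻¹} ≤ √N ε`. -/
theorem statement_7 {d N : ℕ} (φ : Fin N → Fin d → ℝ) (lam : ℝ) (hlam : 0 < lam)
    (Δ : Fin N → ℝ) (ε : ℝ) (hΔ : ∀ k, |Δ k| ≤ ε) :
    Real.sqrt ((∑ k, Δ k • φ k) ⬝ᵥ
        (((∑ k, Matrix.vecMulVec (φ k) (φ k))
            + lam • (1 : Matrix (Fin d) (Fin d) ℝ))⁻¹ *ᵥ (∑ k, Δ k • φ k)))
      ≤ Real.sqrt N * ε := by
  have hunit := (posDef_sum_vecMulVec_self_add_smul_one φ hlam).isUnit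
  calc _ ≤ √(∑ k, Δ k ^ 2) := Real.sqrt_le_sqrt <|
        dotProduct_inv_mulVec_sum_smul_le_sum_sq ((isUnit_iff_isUnit_det _).mp hunit) φ
          (sum_sq_dotProduct_le_dotProduct_mulVec φ hlam.le) Δ
    _ ≤ √N * ε := by simpa using sqrt_sum_sq_le_sqrt_card_mul hΔ
end

section
/- Let d be a positive integer, n a positive real, λ > 0, and set γ = 1/√(2d) and c = 1/√2. Define D = (γ²·n/d + λ)·I_d, v ∈ ℝ^d with every entry equal to γ·c·n/d, and b = c²·(n + n/d) + λ. Then the Schur complement is bounded below as b − vᵀ D^{-1} v > c²·n/d + λ > 0, and consequently its inverse satisfies (b − vᵀ D^{-1} v)^{-1} < d/(c²·n + d·λ) < d/(c²·n). -/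
open Matrix

/-! With `s = γ²n/d`, the quadratic form `vᵀD⁻¹v = d (γcn/d)² / (s + λ)` equals `c²n · s/(s + λ)`,
which is strictly below `c²n` because `λ > 0`. Since `b = c²n + c²n/d + λ`, the Schur complement
exceeds `c²n/d + λ`, and inverting this bound gives the rest. -/

theorem Matrix.inv_smul_one {ι K : Type*} [Fintype ι] [DecidableEq ι] [Field K] (a : K) :
    (a • (1 : Matrix ι ι K))⁻¹ = a⁻¹ • 1 := by
  rcases eq_or_ne a 0 with rfl | ha
  · simp
  · exact inv_eq_right_inv (by rw [smul_mul_smul_comm, mul_inv_cancel₀ ha, one_mul, one_smul])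

theorem Matrix.const_dotProduct_inv_smul_one_mulVec_const {ι K : Type*} [Fintype ι]
    [DecidableEq ι] [Field K] (a x : K) :
    (fun _ : ι => x) ⬝ᵥ ((a • (1 : Matrix ι ι K))⁻¹ *ᵥ fun _ => x) =
      Fintype.card ι * x ^ 2 / a := by
  rw [inv_smul_one, smul_mulVec, one_mulVec, dotProduct_smul]
  simp only [dotProduct, Finset.sum_const, Finset.card_univ, nsmul_eq_mul, smul_eq_mul]
  ring

/-- Bounds on the Schur complement of the arrowhead covariance matrix in the lower-bound
construction: with `γ = 1/√(2d)`, `c = 1/√2`, `D = (γ²n/d + λ)I`, `v ≡ γcn/d` and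
`b = c²(n + n/d) + λ`, we have `b − vᵀD⁻¹v > c²n/d + λ > 0` and
`(b − vᵀD⁻¹v)⁻¹ < d/(c²n + dλ) < d/(c²n)`. -/
theorem statement_13 (d : ℕ) (hd : 0 < d) (n lam : ℝ) (hn : 0 < n) (hlam : 0 < lam) :
    let γ : ℝ := 1 / Real.sqrt (2 * d)
    let c : ℝ := 1 / Real.sqrt 2
    let D : Matrix (Fin d) (Fin d) ℝ := (γ ^ 2 * n / d + lam) • 1
    let v : Fin d → ℝ := fun _ => γ * c * n / d
    let b : ℝ := c ^ 2 * (n + n / d) + lam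
    (c ^ 2 * n / d + lam < b - v ⬝ᵥ (D⁻¹ *ᵥ v) ∧ 0 < c ^ 2 * n / d + lam) ∧
      ((b - v ⬝ᵥ (D⁻¹ *ᵥ v))⁻¹ < d / (c ^ 2 * n + d * lam)
        ∧ d / (c ^ 2 * n + d * lam) < d / (c ^ 2 * n)) := by
  intro γ c D v b
  have hd' : (0 : ℝ) < d := Nat.cast_pos.mpr hd
  have hcn : 0 < c ^ 2 * n := by positivity
  set s : ℝ := γ ^ 2 * n / d
  have hslam : 0 < s + lam := by positivity
  have hquad : v ⬝ᵥ (D⁻¹ *ᵥ v) = c ^ 2 * n * (s / (s + lam)) := by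
    rw [const_dotProduct_inv_smul_one_mulVec_const, Fintype.card_fin]
    simp only [s]
    field_simp
  have hfrac : s / (s + lam) < 1 := (div_lt_one hslam).2 (by linarith)
  have hlower : c ^ 2 * n / d + lam < b - v ⬝ᵥ (D⁻¹ *ᵥ v) := by
    have hb : b = c ^ 2 * n + c ^ 2 * n / d + lam := by ring
    rw [hquad, hb]
    nlinarith
  have hpos : 0 < c ^ 2 * n / d + lam := by positivity
  refine ⟨⟨hlower, hpos⟩, ?_, ?_⟩
  · calc (b - v ⬝ᵥ (D⁻¹ *ᵥ v))⁻¹ < (c ^ 2 * n / d + lam)⁻¹ := inv_strictAnti₀ hpos hlower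
      _ = d / (c ^ 2 * n + d * lam) := by field_simp
  · exact div_lt_div_of_pos_left hd' hcn (by nlinarith)
end

section
/- Fix a state s and parameters θ, θ' ∈ ℝ^d with ‖θ − θ'‖₂ ≤ 1/2. Then for every action a ∈ 𝒜, |π_{θ'}(a|s) − π_θ(a|s)| ≤ 4‖θ − θ'‖₂ · max{ π_θ(a|s), π_{θ'}(a|s) }. -/
open scoped BigOperators

/-!
Moving `θ` by `ε = ‖θ - θ'‖` moves every logit `⟨φ(s,b), θ⟩` by at most `ε`, so every
numerator and the normaliser of the soft-max change by a factor in `[e^{-ε}, e^{ε}]`, and the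
two policies are within a factor `e^{2ε}` of each other. Two nonnegative numbers within a factor
`e^c` differ by at most `(1 - e^{-c})` times the larger one, which is at most `c` times it.
-/

theorem sub_le_mul_of_le_exp_mul {x y c : ℝ} (hy : 0 ≤ y) (hyx : y ≤ Real.exp c * x) :
    y - x ≤ c * y := by
  have hlow : 1 - c ≤ Real.exp (-c) := by linarith [Real.add_one_le_exp (-c)]
  have hx : Real.exp (-c) * y ≤ x := by
    calc Real.exp (-c) * y ≤ Real.exp (-c) * (Real.exp c * x) := by gcongr
      _ = x := by rw [← mul_assoc, ← Real.exp_add, neg_add_cancel, Real.exp_zero, one_mul]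
  nlinarith

theorem abs_sub_le_mul_max_of_le_exp_mul {p q c : ℝ} (hp : 0 ≤ p) (hq : 0 ≤ q)
    (hqp : q ≤ Real.exp c * p) (hpq : p ≤ Real.exp c * q) :
    |q - p| ≤ c * max p q := by
  rcases le_total p q with h | h
  · rw [abs_of_nonneg (sub_nonneg.2 h), max_eq_right h]
    exact sub_le_mul_of_le_exp_mul hq hqp
  · rw [abs_of_nonpos (sub_nonpos.2 h), max_eq_left h, neg_sub]
    exact sub_le_mul_of_le_exp_mul hp hpq

theorem exp_le_exp_mul_exp_of_abs_sub_le {u v ε : ℝ} (h : |v - u| ≤ ε) :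
    Real.exp v ≤ Real.exp ε * Real.exp u := by
  rw [← Real.exp_add]
  exact Real.exp_le_exp.2 (by linarith [(abs_le.1 h).2])

theorem exp_div_sum_exp_le_exp_mul {A : Type*} [Fintype A] {x y : A → ℝ} {ε : ℝ}
    (hxy : ∀ b, |y b - x b| ≤ ε) (a : A) :
    Real.exp (y a) / ∑ b, Real.exp (y b)
      ≤ Real.exp (2 * ε) * (Real.exp (x a) / ∑ b, Real.exp (x b)) := by
  set X := ∑ b, Real.exp (x b)
  set Y := ∑ b, Real.exp (y b)
  have hX : 0 < X := Finset.sum_pos (fun b _ => Real.exp_pos _) ⟨a, Finset.mem_univ a⟩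
  have hY : 0 < Y := Finset.sum_pos (fun b _ => Real.exp_pos _) ⟨a, Finset.mem_univ a⟩
  have hXY : X ≤ Real.exp ε * Y := by
    rw [Finset.mul_sum]
    exact Finset.sum_le_sum fun b _ =>
      exp_le_exp_mul_exp_of_abs_sub_le (by rw [abs_sub_comm]; exact hxy b)
  rw [div_le_iff₀ hY, two_mul, Real.exp_add]
  calc Real.exp (y a) ≤ Real.exp ε * Real.exp (x a) := exp_le_exp_mul_exp_of_abs_sub_le (hxy a)
    _ = Real.exp ε * (Real.exp (x a) / X) * X := by field_simp
    _ ≤ Real.exp ε * (Real.exp (x a) / X) * (Real.exp ε * Y) := by gcongr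
    _ = _ := by ring

theorem abs_inner_sub_inner_le_norm_sub_s15 {E : Type*} [NormedAddCommGroup E]
    [InnerProductSpace ℝ E] {v : E} (hv : ‖v‖ ≤ 1) (x y : E) :
    |inner ℝ v x - inner ℝ v y| ≤ ‖x - y‖ := by
  rw [← inner_sub_right]
  calc |inner ℝ v (x - y)| ≤ ‖v‖ * ‖x - y‖ := abs_real_inner_le_norm _ _
    _ ≤ ‖x - y‖ := mul_le_of_le_one_left (norm_nonneg _) hv

theorem softmaxPolicy_le_exp_mul {S A : Type*} [Fintype A] {d : ℕ}
    {φ : S → A → EuclideanSpace ℝ (Fin d)} (hφ : ∀ s a, ‖φ s a‖ ≤ 1)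
    (s : S) (θ θ' : EuclideanSpace ℝ (Fin d)) (a : A) :
    softmaxPolicy φ θ' s a ≤ Real.exp (2 * ‖θ - θ'‖) * softmaxPolicy φ θ s a := by
  unfold softmaxPolicy
  refine exp_div_sum_exp_le_exp_mul (x := fun b => inner ℝ (φ s b) θ)
    (y := fun b => inner ℝ (φ s b) θ') (fun b => ?_) a
  rw [norm_sub_rev]
  exact abs_inner_sub_inner_le_norm_sub_s15 (hφ s b) θ' θ

theorem statement_15_general {S A : Type*} [Fintype A] {d : ℕ}
    (φ : S → A → EuclideanSpace ℝ (Fin d))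
    (hφ : ∀ s a, ‖φ s a‖ ≤ 1)
    (s : S) (θ θ' : EuclideanSpace ℝ (Fin d))
    (a : A) :
    |softmaxPolicy φ θ' s a - softmaxPolicy φ θ s a|
      ≤ 4 * ‖θ - θ'‖ * max (softmaxPolicy φ θ s a) (softmaxPolicy φ θ' s a) := by
  have hπ : ∀ ϑ, 0 ≤ softmaxPolicy φ ϑ s a := fun ϑ =>
    div_nonneg (Real.exp_pos _).le (Finset.sum_nonneg fun b _ => (Real.exp_pos _).le)
  have hclose := abs_sub_le_mul_max_of_le_exp_mul (hπ θ) (hπ θ')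
    (softmaxPolicy_le_exp_mul hφ s θ θ' a)
    (by simpa only [norm_sub_rev] using softmaxPolicy_le_exp_mul hφ s θ' θ a)
  calc _ ≤ 2 * ‖θ - θ'‖ * max (softmaxPolicy φ θ s a) (softmaxPolicy φ θ' s a) := hclose
    _ ≤ _ := by
      have : 0 ≤ max (softmaxPolicy φ θ s a) (softmaxPolicy φ θ' s a) :=
        le_max_of_le_left (hπ θ)
      gcongr
      norm_num

/-- If `‖θ − θ'‖₂ ≤ 1/2`, then for every action `a`,
`|π_{θ'}(a|s) − π_θ(a|s)| ≤ 4‖θ − θ'‖₂ · max{π_θ(a|s), π_{θ'}(a|s)}`. -/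
theorem statement_15 {S A : Type*} [Fintype A] [Nonempty A] {d : ℕ}
    (φ : S → A → EuclideanSpace ℝ (Fin d))
    (hφ : ∀ s a, ‖φ s a‖ ≤ 1)
    (s : S) (θ θ' : EuclideanSpace ℝ (Fin d))
    (h : ‖θ - θ'‖ ≤ 1 / 2) (a : A) :
    |softmaxPolicy φ θ' s a - softmaxPolicy φ θ s a|
      ≤ 4 * ‖θ - θ'‖ * max (softmaxPolicy φ θ s a) (softmaxPolicy φ θ' s a) :=
  statement_15_general φ hφ s θ θ' a
end
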